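/- arXiv:1810.12457 — 2 statements merged into one kernel-verified Lean document; each statement's English description precedes it below -/
import Mathlib

section
/- Smoothness inequality for the conjugate of a strongly convex function: Let X ⊆ ℝ^d be closed and convex, let ‖·‖ be a norm on ℝ^d with dual norm ‖z‖_* = sup{⟨z, x⟩ : ‖x‖ ≤ 1}, let ψ : ℝ^d → ℝ be 1-strongly convex on X with respect to ‖·‖, and let α > 0. Define ψ*_α(z) = sup_{x ∈ X} ( ⟨z, x⟩ − ψ(x)/α ) and assume for each z the supremum is attained at a unique point y(z) ∈ X. Then for all z, g ∈ ℝ^d, ψ*_α(z − g) ≤ ψ*_α(z) − ⟨y(z), g⟩ + α·‖g‖_*². -/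
open Finset RealInnerProductSpace

/-- `N` is a norm on `ℝ^d` (triangle inequality, absolute homogeneity, definiteness). -/
def IsNorm {d : ℕ} (N : EuclideanSpace ℝ (Fin d) → ℝ) : Prop :=
  (∀ x y, N (x + y) ≤ N x + N y) ∧ (∀ (c : ℝ) x, N (c • x) = |c| * N x) ∧
    (∀ x, N x = 0 ↔ x = 0)

/-- The dual norm `‖z‖_* = sup {⟨z, x⟩ : N x ≤ 1}` of a norm `N` on `ℝ^d`. -/
noncomputable def dualNorm {d : ℕ} (N : EuclideanSpace ℝ (Fin d) → ℝ)
    (z : EuclideanSpace ℝ (Fin d)) : ℝ :=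
  sSup {r : ℝ | ∃ x : EuclideanSpace ℝ (Fin d), N x ≤ 1 ∧ r = ⟪z, x⟫}

/-- `ψ` is 1-strongly convex on `X` with respect to the norm `N`. -/
def StronglyConvexOnWith {d : ℕ} (X : Set (EuclideanSpace ℝ (Fin d)))
    (N : EuclideanSpace ℝ (Fin d) → ℝ) (ψ : EuclideanSpace ℝ (Fin d) → ℝ) : Prop :=
  ∀ ⦃x⦄, x ∈ X → ∀ ⦃y⦄, y ∈ X → ∀ ⦃θ : ℝ⦄, 0 ≤ θ → θ ≤ 1 →
    ψ (θ • x + (1 - θ) • y) ≤ θ * ψ x + (1 - θ) * ψ y - θ * (1 - θ) / 2 * N (x - y) ^ 2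

/-!
Strong convexity of `ψ` makes the maximiser `y(z)` a point of quadratic growth:
`⟨z, x⟩ − ψ(x)/α ≤ ψ*_α(z) − ‖x − y(z)‖² / (2α)` on `X`. Take `x = y(z − g)` and bound the
remaining term `⟨g, y(z) − x⟩` by Fenchel–Young, `‖x − y(z)‖² / (2α) + (α/2) ‖g‖_*²`.
Finite dimensionality enters only to make `‖·‖_*` finite: `N` is continuous (being convex), hence
bounded below by a multiple of the Euclidean norm.
-/

variable {d : ℕ} {N : EuclideanSpace ℝ (Fin d) → ℝ}

namespace IsNorm

variable (hN : IsNorm N)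
include hN

lemma map_zero : N 0 = 0 := (hN.2.2 0).2 rfl

lemma map_smul (c : ℝ) (x : EuclideanSpace ℝ (Fin d)) : N (c • x) = |c| * N x := hN.2.1 c x

lemma map_neg (x : EuclideanSpace ℝ (Fin d)) : N (-x) = N x := by
  simpa using hN.map_smul (-1) x

lemma map_sub_rev (x y : EuclideanSpace ℝ (Fin d)) : N (x - y) = N (y - x) := by
  rw [← neg_sub, hN.map_neg]

lemma nonneg (x : EuclideanSpace ℝ (Fin d)) : 0 ≤ N x := by
  have h := hN.1 x (-x)
  rw [add_neg_cancel, hN.map_zero, hN.map_neg] at h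
  linarith

lemma pos {x : EuclideanSpace ℝ (Fin d)} (hx : x ≠ 0) : 0 < N x :=
  (hN.nonneg x).lt_of_ne fun h => hx ((hN.2.2 x).1 h.symm)

lemma convexOn : ConvexOn ℝ Set.univ N := by
  refine ⟨convex_univ, fun x _ y _ a b ha hb _ => ?_⟩
  calc N (a • x + b • y) ≤ N (a • x) + N (b • y) := hN.1 _ _
    _ = a • N x + b • N y := by
      rw [hN.map_smul, hN.map_smul, abs_of_nonneg ha, abs_of_nonneg hb, smul_eq_mul, smul_eq_mul]

lemma continuous : Continuous N := hN.convexOn.locallyLipschitz.continuous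

/-- The minimum of `N` on the Euclidean unit sphere gives the constant. -/
lemma exists_pos_mul_norm_le : ∃ m > 0, ∀ x, m * ‖x‖ ≤ N x := by
  obtain hE | hE := subsingleton_or_nontrivial (EuclideanSpace ℝ (Fin d))
  · exact ⟨1, one_pos, fun x => by simp [Subsingleton.elim x 0, hN.map_zero]⟩
  obtain ⟨x₀, hx₀, hmin⟩ := (isCompact_sphere (0 : EuclideanSpace ℝ (Fin d)) 1).exists_isMinOn
    (NormedSpace.sphere_nonempty.2 zero_le_one) hN.continuous.continuousOn
  refine ⟨N x₀, hN.pos (ne_zero_of_mem_unit_sphere ⟨x₀, hx₀⟩), fun x => ?_⟩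
  rcases eq_or_ne x 0 with rfl | hx
  · simp [hN.map_zero]
  have hxpos : 0 < ‖x‖ := norm_pos_iff.2 hx
  have hunit : ‖x‖⁻¹ • x ∈ Metric.sphere (0 : EuclideanSpace ℝ (Fin d)) 1 := by
    simp [norm_smul, hxpos.ne']
  have h : N x₀ ≤ ‖x‖⁻¹ * N x := by
    simpa [hN.map_smul, abs_of_pos hxpos] using hmin hunit
  rwa [le_inv_mul_iff₀ hxpos, mul_comm] at h

lemma bddAbove_inner (z : EuclideanSpace ℝ (Fin d)) :
    BddAbove {r : ℝ | ∃ x : EuclideanSpace ℝ (Fin d), N x ≤ 1 ∧ r = ⟪z, x⟫} := by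
  obtain ⟨m, hm, hlow⟩ := hN.exists_pos_mul_norm_le
  refine ⟨‖z‖ * (1 / m), ?_⟩
  rintro r ⟨x, hx, rfl⟩
  have hxm : ‖x‖ ≤ 1 / m := (le_div_iff₀' hm).2 ((hlow x).trans hx)
  exact (real_inner_le_norm z x).trans (mul_le_mul_of_nonneg_left hxm (norm_nonneg z))

lemma inner_le_dualNorm_mul (z x : EuclideanSpace ℝ (Fin d)) : ⟪z, x⟫ ≤ dualNorm N z * N x := by
  rcases eq_or_ne x 0 with rfl | hx
  · simp [hN.map_zero]
  have hNx := hN.pos hx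
  have hmem : ⟪z, (N x)⁻¹ • x⟫ ∈ {r : ℝ | ∃ x : EuclideanSpace ℝ (Fin d), N x ≤ 1 ∧ r = ⟪z, x⟫} :=
    ⟨(N x)⁻¹ • x, by rw [hN.map_smul, abs_of_pos (inv_pos.2 hNx), inv_mul_cancel₀ hNx.ne'], rfl⟩
  have h := le_csSup (hN.bddAbove_inner z) hmem
  rw [real_inner_smul_right, inv_mul_le_iff₀ hNx, mul_comm] at h
  exact h

/-- Fenchel–Young inequality for `x ↦ N x ^ 2 / (2 α)`, whose conjugate is `α / 2 * ‖·‖_*²`. -/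
lemma inner_le_sq_div_add {α : ℝ} (hα : 0 < α) (z x : EuclideanSpace ℝ (Fin d)) :
    ⟪z, x⟫ ≤ N x ^ 2 / (2 * α) + α / 2 * dualNorm N z ^ 2 := by
  have h := hN.inner_le_dualNorm_mul z x
  have hsq : 2 * α * (dualNorm N z * N x) ≤ N x ^ 2 + α ^ 2 * dualNorm N z ^ 2 := by
    nlinarith [sq_nonneg (N x - α * dualNorm N z)]
  have hexp : N x ^ 2 / (2 * α) + α / 2 * dualNorm N z ^ 2
      = (N x ^ 2 + α ^ 2 * dualNorm N z ^ 2) / (2 * α) := by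
    field_simp
  rw [hexp, le_div_iff₀ (by positivity)]
  nlinarith

end IsNorm

namespace StronglyConvexOnWith

variable {X : Set (EuclideanSpace ℝ (Fin d))} {ψ : EuclideanSpace ℝ (Fin d) → ℝ}

lemma sub_inner (hψ : StronglyConvexOnWith X N ψ) (w : EuclideanSpace ℝ (Fin d)) :
    StronglyConvexOnWith X N (fun x => ψ x - ⟪w, x⟫) := by
  intro x hx y hy θ hθ0 hθ1
  have h := hψ hx hy hθ0 hθ1
  simp only [inner_add_right, real_inner_smul_right]
  linarith

/-- Compare `ψ u` with `ψ` at `θ • v + (1 - θ) • u`, divide by `θ` and let `θ → 0⁺`. -/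
lemma add_sq_le_of_isMinOn (hX : Convex ℝ X) (hψ : StronglyConvexOnWith X N ψ)
    {u : EuclideanSpace ℝ (Fin d)} (hu : u ∈ X) (hmin : IsMinOn ψ X u)
    {v : EuclideanSpace ℝ (Fin d)} (hv : v ∈ X) :
    ψ u + N (v - u) ^ 2 / 2 ≤ ψ v := by
  have hθ : ∀ θ ∈ Set.Ioc (0 : ℝ) 1, ψ u + (1 - θ) * (N (v - u) ^ 2 / 2) ≤ ψ v := by
    rintro θ ⟨hθ0, hθ1⟩
    have hmid : ψ u ≤ ψ (θ • v + (1 - θ) • u) :=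
      hmin (hX hv hu hθ0.le (by linarith) (by ring))
    have hconv := hψ hv hu hθ0.le hθ1
    have hscaled : θ * (ψ u + (1 - θ) * (N (v - u) ^ 2 / 2)) ≤ θ * ψ v := by linarith
    exact le_of_mul_le_mul_left hscaled hθ0
  have hlim : Filter.Tendsto (fun θ : ℝ => ψ u + (1 - θ) * (N (v - u) ^ 2 / 2))
      (nhdsWithin 0 (Set.Ioi 0)) (nhds (ψ u + N (v - u) ^ 2 / 2)) := by
    have hcont : Continuous fun θ : ℝ => ψ u + (1 - θ) * (N (v - u) ^ 2 / 2) := by fun_prop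
    simpa using (hcont.tendsto 0).mono_left nhdsWithin_le_nhds
  exact le_of_tendsto hlim <| Filter.eventually_of_mem
    (Ioc_mem_nhdsGT (zero_lt_one' ℝ)) hθ

lemma add_sq_div_le_of_isMaxOn (hX : Convex ℝ X) (hψ : StronglyConvexOnWith X N ψ)
    {α : ℝ} (hα : 0 < α) (w : EuclideanSpace ℝ (Fin d))
    {u : EuclideanSpace ℝ (Fin d)} (hu : u ∈ X) (hmax : IsMaxOn (fun x => ⟪w, x⟫ - ψ x / α) X u)
    {v : EuclideanSpace ℝ (Fin d)} (hv : v ∈ X) :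
    ⟪w, v⟫ - ψ v / α + N (v - u) ^ 2 / (2 * α) ≤ ⟪w, u⟫ - ψ u / α := by
  have hscale : ∀ x, ψ x - ⟪α • w, x⟫ = -α * (⟪w, x⟫ - ψ x / α) := fun x => by
    rw [real_inner_smul_left]
    field_simp
    ring
  have hmin : IsMinOn (fun x => ψ x - ⟪α • w, x⟫) X u := isMinOn_iff.2 fun x hx => by
    have h : ⟪w, x⟫ - ψ x / α ≤ ⟪w, u⟫ - ψ u / α := hmax hx
    rw [hscale, hscale]
    nlinarith
  have h := (hψ.sub_inner (α • w)).add_sq_le_of_isMinOn hX hu hmin hv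
  simp only [hscale] at h
  have hgap : ⟪w, u⟫ - ψ u / α - (⟪w, v⟫ - ψ v / α + N (v - u) ^ 2 / (2 * α))
      = (-α * (⟪w, v⟫ - ψ v / α) - (-α * (⟪w, u⟫ - ψ u / α) + N (v - u) ^ 2 / 2)) / α := by
    field_simp
    ring
  rw [← sub_nonneg, hgap]
  exact div_nonneg (by linarith) hα.le

end StronglyConvexOnWith

theorem conjugate_smoothness_general {d : ℕ}
    (X : Set (EuclideanSpace ℝ (Fin d))) (hXcv : Convex ℝ X)
    (N : EuclideanSpace ℝ (Fin d) → ℝ) (hN : IsNorm N)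
    (ψ : EuclideanSpace ℝ (Fin d) → ℝ) (hψ : StronglyConvexOnWith X N ψ)
    (α : ℝ) (hα : 0 < α)
    (ψstar : EuclideanSpace ℝ (Fin d) → ℝ)
    (hψstar : ∀ w, IsLUB {r : ℝ | ∃ x ∈ X, r = ⟪w, x⟫ - ψ x / α} (ψstar w))
    (y : EuclideanSpace ℝ (Fin d) → EuclideanSpace ℝ (Fin d))
    (hyX : ∀ w, y w ∈ X)
    (hattain : ∀ w, ψstar w = ⟪w, y w⟫ - ψ (y w) / α) :
    ∀ z g : EuclideanSpace ℝ (Fin d),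
      ψstar (z - g) ≤ ψstar z - ⟪y z, g⟫ + α * dualNorm N g ^ 2 := by
  intro z g
  have hmax : IsMaxOn (fun x => ⟪z, x⟫ - ψ x / α) X (y z) := isMaxOn_iff.2 fun x hx => by
    rw [← hattain z]
    exact (hψstar z).1 ⟨x, hx, rfl⟩
  have hgrowth := hψ.add_sq_div_le_of_isMaxOn hXcv hα z (hyX z) hmax (hyX (z - g))
  have hyoung := hN.inner_le_sq_div_add hα g (y z - y (z - g))
  rw [hN.map_sub_rev, inner_sub_right] at hyoung
  rw [hattain z, hattain (z - g), inner_sub_left, real_inner_comm g (y z)]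
  linarith [mul_nonneg hα.le (sq_nonneg (dualNorm N g))]

/-- **Smoothness inequality for the conjugate of a strongly convex function.**
With `ψ*_α(z) = sup_{x ∈ X} (⟨z, x⟩ − ψ(x)/α)` attained at the unique point `y(z) ∈ X`,
one has `ψ*_α(z − g) ≤ ψ*_α(z) − ⟨y(z), g⟩ + α ‖g‖_*²`. -/
theorem conjugate_smoothness {d : ℕ}
    (X : Set (EuclideanSpace ℝ (Fin d))) (hXcl : IsClosed X) (hXcv : Convex ℝ X)
    (N : EuclideanSpace ℝ (Fin d) → ℝ) (hN : IsNorm N)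
    (ψ : EuclideanSpace ℝ (Fin d) → ℝ) (hψ : StronglyConvexOnWith X N ψ)
    (α : ℝ) (hα : 0 < α)
    (ψstar : EuclideanSpace ℝ (Fin d) → ℝ)
    (hψstar : ∀ w, IsLUB {r : ℝ | ∃ x ∈ X, r = ⟪w, x⟫ - ψ x / α} (ψstar w))
    (y : EuclideanSpace ℝ (Fin d) → EuclideanSpace ℝ (Fin d))
    (hyX : ∀ w, y w ∈ X)
    (hattain : ∀ w, ψstar w = ⟪w, y w⟫ - ψ (y w) / α)
    (huniq : ∀ w x, x ∈ X → ψstar w = ⟪w, x⟫ - ψ x / α → x = y w) :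
    ∀ z g : EuclideanSpace ℝ (Fin d),
      ψstar (z - g) ≤ ψstar z - ⟪y z, g⟫ + α * dualNorm N g ^ 2 :=
  conjugate_smoothness_general X hXcv N hN ψ hψ α hα ψstar hψstar y hyX hattain
end

section
/- Mixing tail bound for random doubly stochastic matrix products: Let P(s), P(s+1), …, P(t) be independent random n×n symmetric doubly stochastic matrices such that E[P(r)²] is the same matrix for all r, and let λ denote the second-largest eigenvalue of E[P(r)²]. Set Φ(t,s) = P(t)·P(t−1)⋯P(s). Then for every ε > 0 and every standard basis vector e_i ∈ ℝⁿ, Pr( ‖Φ(t,s)·e_i − (1/n)·𝟏‖₂ ≥ ε ) ≤ ε^{−2}·λ^{t−s+1}. -/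
/-!
Let `w = e_i - 𝟏/n` and `v r = Φ r w`. Since `Φ r` is doubly stochastic, `v r = Φ r e_i - 𝟏/n`,
`v r` has mean zero, and `v (r + 1) = P (r + 1) v r`. The vector `v r` is measurable for the
σ-algebra generated by `P s, …, P r`, hence independent of the symmetric matrix `P (r + 1)`, so
`E‖v (r + 1)‖² = E[v rᵀ P(r + 1)² v r] = E[v rᵀ Q v r] ≤ λ E‖v r‖²`, the last step because `v r`
is orthogonal to `𝟏`. Thus `E‖v t‖² ≤ λ^(t-s+1) ‖w‖² ≤ λ^(t-s+1)`, and Chebyshev's inequality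
gives the tail bound.
-/

open Finset MeasureTheory ProbabilityTheory

/-- An `n × n` real matrix is doubly stochastic if all its entries are nonnegative and
every row sum and every column sum equals 1. -/
def DoublyStochastic {n : ℕ} (P : Matrix (Fin n) (Fin n) ℝ) : Prop :=
  (∀ i j, 0 ≤ P i j) ∧ (∀ i, ∑ j, P i j = 1) ∧ (∀ j, ∑ i, P i j = 1)

/-- The ℓ₂-norm on `ℝⁿ`. -/
noncomputable def l2norm {n : ℕ} (v : Fin n → ℝ) : ℝ := Real.sqrt (∑ i, v i ^ 2)

/-- The second-largest eigenvalue of a symmetric doubly stochastic (hence PSD when of the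
form `E[P²]`) matrix, characterized as the maximum of the quadratic form on the subspace of
mean-zero vectors (the orthogonal complement of the leading eigenvector `𝟏`). -/
noncomputable def lambda2 {n : ℕ} (M : Matrix (Fin n) (Fin n) ℝ) : ℝ :=
  sSup {r : ℝ | ∃ v : Fin n → ℝ, (∑ i, v i) = 0 ∧ l2norm v ≤ 1 ∧
    r = ∑ i, v i * M.mulVec v i}

open Matrix

section Deterministic

variable {n : ℕ}

theorem doublyStochastic_iff_mem {A : Matrix (Fin n) (Fin n) ℝ} :
    DoublyStochastic A ↔ A ∈ doublyStochastic ℝ (Fin n) :=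
  mem_doublyStochastic_iff_sum.symm

theorem abs_mulVec_apply_le_of_mem_doublyStochastic {ι : Type*} [Fintype ι] [DecidableEq ι]
    {A : Matrix ι ι ℝ} (hA : A ∈ doublyStochastic ℝ ι) (w : ι → ℝ) (j : ι) :
    |(A *ᵥ w) j| ≤ ∑ l, |w l| :=
  calc |(A *ᵥ w) j| = |∑ l, A j l * w l| := rfl
    _ ≤ ∑ l, |A j l * w l| := abs_sum_le_sum_abs _ _
    _ ≤ ∑ l, |w l| := sum_le_sum fun l _ => by
      rw [abs_mul, abs_of_nonneg (nonneg_of_mem_doublyStochastic hA)]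
      exact mul_le_of_le_one_left (abs_nonneg _) (le_one_of_mem_doublyStochastic hA)

theorem dotProduct_mulVec_eq_sum {ι R : Type*} [Fintype ι] [CommSemiring R] (B : Matrix ι ι R)
    (u : ι → R) :
    u ⬝ᵥ B *ᵥ u = ∑ j, ∑ k, B j k * (u j * u k) := by
  simp only [dotProduct, mulVec, mul_sum]
  exact sum_congr rfl fun j _ => sum_congr rfl fun k _ => by ring

theorem Matrix.IsSymm.mulVec_dotProduct_mulVec {ι R : Type*} [Fintype ι] [CommSemiring R]
    {A : Matrix ι ι R} (hA : A.IsSymm) (u : ι → R) : A *ᵥ u ⬝ᵥ A *ᵥ u = u ⬝ᵥ (A * A) *ᵥ u := by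
  rw [← mulVec_mulVec, dotProduct_mulVec u A]
  congr 1
  rw [← vecMul_transpose, hA.eq]

theorem sq_l2norm (v : Fin n → ℝ) : l2norm v ^ 2 = v ⬝ᵥ v := by
  rw [l2norm, Real.sq_sqrt (by positivity)]
  simp only [dotProduct, sq]

theorem l2norm_nonneg (v : Fin n → ℝ) : 0 ≤ l2norm v := Real.sqrt_nonneg _

theorem abs_le_l2norm (v : Fin n → ℝ) (j : Fin n) : |v j| ≤ l2norm v :=
  Real.abs_le_sqrt (single_le_sum (f := fun i => v i ^ 2) (fun _ _ => sq_nonneg _) (mem_univ j))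

theorem l2norm_smul (c : ℝ) (v : Fin n → ℝ) : l2norm (c • v) = |c| * l2norm v := by
  simp only [l2norm, Pi.smul_apply, smul_eq_mul, mul_pow, ← mul_sum]
  rw [Real.sqrt_mul (sq_nonneg c), Real.sqrt_sq_eq_abs]

theorem lambda2_bddAbove (M : Matrix (Fin n) (Fin n) ℝ) :
    BddAbove {r : ℝ | ∃ v : Fin n → ℝ, (∑ i, v i) = 0 ∧ l2norm v ≤ 1 ∧
      r = ∑ i, v i * M.mulVec v i} := by
  refine ((isCompact_closedBall (0 : Fin n → ℝ) 1).bddAbove_image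
    (f := fun v => v ⬝ᵥ M *ᵥ v) (by fun_prop)).mono ?_
  rintro _ ⟨v, -, hv, rfl⟩
  refine ⟨v, mem_closedBall_zero_iff.2 ((pi_norm_le_iff_of_nonneg zero_le_one).2 fun j => ?_), rfl⟩
  exact (abs_le_l2norm v j).trans hv

theorem le_lambda2 (M : Matrix (Fin n) (Fin n) ℝ) {v : Fin n → ℝ} (hv : ∑ i, v i = 0)
    (hv1 : l2norm v ≤ 1) : v ⬝ᵥ M *ᵥ v ≤ lambda2 M :=
  le_csSup (lambda2_bddAbove M) ⟨v, hv, hv1, rfl⟩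

theorem lambda2_nonneg (M : Matrix (Fin n) (Fin n) ℝ) : 0 ≤ lambda2 M := by
  simpa using le_lambda2 M (v := 0) (by simp) (by simp [l2norm])

theorem dotProduct_mulVec_le_lambda2 (M : Matrix (Fin n) (Fin n) ℝ) {u : Fin n → ℝ}
    (hu : ∑ i, u i = 0) : u ⬝ᵥ M *ᵥ u ≤ lambda2 M * (u ⬝ᵥ u) := by
  rcases (l2norm_nonneg u).eq_or_lt with h | hpos
  · have : u = 0 := dotProduct_self_eq_zero.1 (by rw [← sq_l2norm, ← h, sq, zero_mul])
    simp [this]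
  set c := l2norm u
  have hunit := le_lambda2 M (v := c⁻¹ • u) (by simp [← mul_sum, hu])
    (by rw [l2norm_smul, abs_inv, abs_of_pos hpos, inv_mul_cancel₀ hpos.ne'])
  rw [mulVec_smul, smul_dotProduct, dotProduct_smul, smul_eq_mul, smul_eq_mul,
    ← mul_assoc] at hunit
  rw [← sq_l2norm]
  calc u ⬝ᵥ M *ᵥ u = c ^ 2 * (c⁻¹ * c⁻¹ * (u ⬝ᵥ M *ᵥ u)) := by field_simp
    _ ≤ c ^ 2 * lambda2 M := by gcongr
    _ = lambda2 M * c ^ 2 := mul_comm _ _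

end Deterministic

section Expectation

variable {n : ℕ} {Ω : Type*} [MeasurableSpace Ω] {μ : Measure Ω}

theorem integral_dotProduct_mulVec_eq_sum {ι : Type*} [Fintype ι] {C : Ω → Matrix ι ι ℝ}
    {u : Ω → ι → ℝ} (hC : ∀ j k, Integrable (fun ω => C ω j k * (u ω j * u ω k)) μ) :
    ∫ ω, u ω ⬝ᵥ C ω *ᵥ u ω ∂μ = ∑ j, ∑ k, ∫ ω, C ω j k * (u ω j * u ω k) ∂μ := by
  simp only [dotProduct_mulVec_eq_sum]
  rw [integral_finsetSum _ fun j _ => integrable_finsetSum _ fun k _ => hC j k]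
  exact sum_congr rfl fun j _ => integral_finsetSum _ fun k _ => hC j k

theorem integral_dotProduct_mulVec_of_indepFun {ι : Type*} [Fintype ι] {B : Ω → Matrix ι ι ℝ}
    {u : Ω → ι → ℝ} {Q : Matrix ι ι ℝ}
    (hQ : ∀ j k, Q j k = ∫ ω, B ω j k ∂μ)
    (hind : ∀ j k, IndepFun (fun ω => B ω j k) (fun ω => u ω j * u ω k) μ)
    (hB : ∀ j k, Integrable (fun ω => B ω j k) μ)
    (hu : ∀ j k, Integrable (fun ω => u ω j * u ω k) μ) :
    ∫ ω, u ω ⬝ᵥ B ω *ᵥ u ω ∂μ = ∫ ω, u ω ⬝ᵥ Q *ᵥ u ω ∂μ := by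
  rw [integral_dotProduct_mulVec_eq_sum fun j k => (hind j k).integrable_mul (hB j k) (hu j k),
    integral_dotProduct_mulVec_eq_sum (C := fun _ => Q) fun j k => (hu j k).const_mul _]
  refine sum_congr rfl fun j _ => sum_congr rfl fun k _ => ?_
  rw [(hind j k).integral_fun_mul_eq_mul_integral (hB j k).aestronglyMeasurable
    (hu j k).aestronglyMeasurable, integral_const_mul, hQ]

theorem integral_dotProduct_mulVec_le_lambda2 (Q : Matrix (Fin n) (Fin n) ℝ)
    {u : Ω → Fin n → ℝ} (hu0 : ∀ ω, ∑ j, u ω j = 0)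
    (hu : ∀ j k, Integrable (fun ω => u ω j * u ω k) μ) :
    ∫ ω, u ω ⬝ᵥ Q *ᵥ u ω ∂μ ≤ lambda2 Q * ∫ ω, u ω ⬝ᵥ u ω ∂μ := by
  rw [← integral_const_mul]
  refine integral_mono ?_ ?_ fun ω => dotProduct_mulVec_le_lambda2 Q (hu0 ω)
  · simp only [dotProduct_mulVec_eq_sum]
    exact integrable_finsetSum _ fun j _ => integrable_finsetSum _ fun k _ =>
      (hu j k).const_mul _
  · exact (integrable_finsetSum _ fun j _ => hu j j).const_mul _

theorem integral_mulVec_dotProduct_mulVec_le {A : Ω → Matrix (Fin n) (Fin n) ℝ}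
    {u : Ω → Fin n → ℝ} {Q : Matrix (Fin n) (Fin n) ℝ} (hA : ∀ ω, (A ω).IsSymm)
    (hu0 : ∀ ω, ∑ j, u ω j = 0) (hQ : ∀ j k, Q j k = ∫ ω, (A ω * A ω) j k ∂μ)
    (hind : ∀ j k, IndepFun (fun ω => (A ω * A ω) j k) (fun ω => u ω j * u ω k) μ)
    (hAA : ∀ j k, Integrable (fun ω => (A ω * A ω) j k) μ)
    (hu : ∀ j k, Integrable (fun ω => u ω j * u ω k) μ) :
    ∫ ω, A ω *ᵥ u ω ⬝ᵥ A ω *ᵥ u ω ∂μ ≤ lambda2 Q * ∫ ω, u ω ⬝ᵥ u ω ∂μ := by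
  simp only [fun ω => (hA ω).mulVec_dotProduct_mulVec]
  rw [integral_dotProduct_mulVec_of_indepFun hQ hind hAA hu]
  exact integral_dotProduct_mulVec_le_lambda2 Q hu0 hu

theorem meas_l2norm_ge_le [IsFiniteMeasure μ] {f : Ω → Fin n → ℝ}
    (hf : Integrable (fun ω => f ω ⬝ᵥ f ω) μ) {ε : ℝ} (hε : 0 < ε) :
    μ {ω | ε ≤ l2norm (f ω)} ≤ ENNReal.ofReal (ε⁻¹ ^ 2 * ∫ ω, f ω ⬝ᵥ f ω ∂μ) := by
  have hset : {ω | ε ≤ l2norm (f ω)} = {ω | ε ^ 2 ≤ f ω ⬝ᵥ f ω} := by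
    ext ω
    change ε ≤ l2norm (f ω) ↔ ε ^ 2 ≤ f ω ⬝ᵥ f ω
    rw [← sq_l2norm,
      pow_le_pow_iff_left₀ hε.le (l2norm_nonneg _) two_ne_zero]
  have hmarkov := mul_meas_ge_le_integral_of_nonneg
    (ae_of_all _ fun ω => (sq_l2norm (f ω)).symm ▸ sq_nonneg (l2norm (f ω))) hf (ε ^ 2)
  rw [hset, ← ofReal_measureReal]
  gcongr
  rw [inv_pow, ← div_eq_inv_mul, le_div_iff₀ (by positivity)]
  linarith

end Expectation

section RandomProduct

variable {n : ℕ} {Ω : Type*} {s t : ℕ} {P : ℕ → Ω → Fin n → Fin n → ℝ}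
  {Φ : ℕ → Ω → Matrix (Fin n) (Fin n) ℝ}

theorem randomProduct_mem_doublyStochastic
    (hds : ∀ r ω, s ≤ r → r ≤ t → DoublyStochastic (Matrix.of (P r ω)))
    (hΦs : ∀ ω, Φ s ω = Matrix.of (P s ω))
    (hΦstep : ∀ r ω, s ≤ r → r < t → Φ (r + 1) ω = Matrix.of (P (r + 1) ω) * Φ r ω)
    {r : ℕ} (hsr : s ≤ r) (hrt : r ≤ t) (ω : Ω) : Φ r ω ∈ doublyStochastic ℝ (Fin n) := by
  induction r, hsr using Nat.le_induction with
  | base => rw [hΦs, ← doublyStochastic_iff_mem]; exact hds s ω le_rfl hrt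
  | succ r hsr ih =>
    rw [hΦstep r ω hsr (by omega)]
    exact Submonoid.mul_mem _ (doublyStochastic_iff_mem.1 (hds _ ω (by omega) hrt))
      (ih (by omega))

theorem measurable_randomProduct_apply {m : MeasurableSpace Ω}
    (hΦs : ∀ ω, Φ s ω = Matrix.of (P s ω))
    (hΦstep : ∀ r ω, s ≤ r → r < t → Φ (r + 1) ω = Matrix.of (P (r + 1) ω) * Φ r ω)
    {r : ℕ} (hsr : s ≤ r) (hrt : r ≤ t) (hP : ∀ u, s ≤ u → u ≤ r → Measurable[m] (P u))
    (j k : Fin n) : Measurable[m] fun ω => Φ r ω j k := by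
  induction r, hsr using Nat.le_induction generalizing j k with
  | base =>
    simp only [hΦs, of_apply]
    exact (hP s le_rfl le_rfl).eval.eval
  | succ r hsr ih =>
    have hB := ih (by omega) fun u hsu hur => hP u hsu (by omega)
    simp only [hΦstep r _ hsr (by omega), mul_apply, of_apply]
    exact Finset.measurable_sum _ fun l _ => (hP (r + 1) (by omega) le_rfl).eval.eval.mul (hB l k)

theorem measurable_randomProduct_mulVec {m : MeasurableSpace Ω}
    (hΦs : ∀ ω, Φ s ω = Matrix.of (P s ω))
    (hΦstep : ∀ r ω, s ≤ r → r < t → Φ (r + 1) ω = Matrix.of (P (r + 1) ω) * Φ r ω)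
    {r : ℕ} (hsr : s ≤ r) (hrt : r ≤ t) (hP : ∀ u, s ≤ u → u ≤ r → Measurable[m] (P u))
    (w : Fin n → ℝ) : Measurable[m] fun ω => Φ r ω *ᵥ w := by
  refine measurable_pi_lambda _ fun j => ?_
  simp only [mulVec, dotProduct]
  exact Finset.measurable_sum _ fun l _ =>
    (measurable_randomProduct_apply hΦs hΦstep hsr hrt hP j l).mul_const _

variable [MeasurableSpace Ω] {μ : Measure Ω}

theorem indepFun_randomProduct_mulVec (hmeas : ∀ r, Measurable (P r))
    (hindep : iIndepFun (fun r : {u : ℕ // s ≤ u ∧ u ≤ t} => P r.1) μ)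
    (hΦs : ∀ ω, Φ s ω = Matrix.of (P s ω))
    (hΦstep : ∀ r ω, s ≤ r → r < t → Φ (r + 1) ω = Matrix.of (P (r + 1) ω) * Φ r ω)
    {r : ℕ} (hsr : s ≤ r) (hrt : r < t) (w : Fin n → ℝ) :
    IndepFun (P (r + 1)) (fun ω => Φ r ω *ᵥ w) μ := by
  let m : {u : ℕ // s ≤ u ∧ u ≤ t} → MeasurableSpace Ω :=
    fun u => MeasurableSpace.comap (P u.1) inferInstance
  have hpast := indep_iSup_of_disjoint (m := m) (fun u => (hmeas u.1).comap_le)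
    ((iIndepFun_iff_iIndep _ _ _).1 hindep) (S := {⟨r + 1, by omega, hrt⟩})
    (T := {u | u.1 ≤ r}) (Set.disjoint_singleton_left.2 (by simp))
  rw [_root_.iSup_singleton] at hpast
  rw [IndepFun_iff_Indep]
  refine indep_of_indep_of_le_right hpast (Measurable.comap_le ?_)
  refine measurable_randomProduct_mulVec hΦs hΦstep hsr hrt.le (fun u hsu hur => ?_) w
  exact (comap_measurable (P u)).mono (le_iSup₂_of_le ⟨u, hsu, by omega⟩ hur le_rfl) le_rfl

theorem measurable_of_mul_self_apply (j k : Fin n) :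
    Measurable fun x : Fin n → Fin n → ℝ => (Matrix.of x * Matrix.of x) j k :=
  (by fun_prop : Continuous fun x : Fin n → Fin n → ℝ => (Matrix.of x * Matrix.of x) j k).measurable

theorem integrable_mul_self_apply_of_doublyStochastic [IsFiniteMeasure μ]
    {A : Ω → Fin n → Fin n → ℝ} (hA : Measurable A)
    (hds : ∀ ω, DoublyStochastic (Matrix.of (A ω))) (j k : Fin n) :
    Integrable (fun ω => (Matrix.of (A ω) * Matrix.of (A ω)) j k) μ := by
  refine Integrable.of_bound ((measurable_of_mul_self_apply j k).comp hA).aestronglyMeasurable 1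
    (ae_of_all _ fun ω => ?_)
  have hsq := Submonoid.mul_mem _ (doublyStochastic_iff_mem.1 (hds ω))
    (doublyStochastic_iff_mem.1 (hds ω))
  rw [Real.norm_eq_abs, abs_of_nonneg (nonneg_of_mem_doublyStochastic hsq)]
  exact le_one_of_mem_doublyStochastic hsq

theorem integrable_randomProduct_mulVec_mul [IsFiniteMeasure μ] (hmeas : ∀ r, Measurable (P r))
    (hds : ∀ r ω, s ≤ r → r ≤ t → DoublyStochastic (Matrix.of (P r ω)))
    (hΦs : ∀ ω, Φ s ω = Matrix.of (P s ω))
    (hΦstep : ∀ r ω, s ≤ r → r < t → Φ (r + 1) ω = Matrix.of (P (r + 1) ω) * Φ r ω)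
    {r : ℕ} (hsr : s ≤ r) (hrt : r ≤ t) (w : Fin n → ℝ) (j k : Fin n) :
    Integrable (fun ω => (Φ r ω *ᵥ w) j * (Φ r ω *ᵥ w) k) μ := by
  have hu := measurable_randomProduct_mulVec hΦs hΦstep hsr hrt (fun u _ _ => hmeas u) w
  refine Integrable.of_bound (hu.eval.mul hu.eval).aestronglyMeasurable
    ((∑ l, |w l|) * ∑ l, |w l|) (ae_of_all _ fun ω => ?_)
  have hΦ := randomProduct_mem_doublyStochastic hds hΦs hΦstep hsr hrt ω
  rw [Real.norm_eq_abs, abs_mul]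
  exact mul_le_mul (abs_mulVec_apply_le_of_mem_doublyStochastic hΦ w j)
    (abs_mulVec_apply_le_of_mem_doublyStochastic hΦ w k) (abs_nonneg _) (by positivity)

theorem integral_randomProduct_mulVec_le [IsProbabilityMeasure μ]
    (hmeas : ∀ r, Measurable (P r))
    (hds : ∀ r ω, s ≤ r → r ≤ t → DoublyStochastic (Matrix.of (P r ω)))
    (hsym : ∀ r ω, s ≤ r → r ≤ t → (Matrix.of (P r ω)).IsSymm)
    (hindep : iIndepFun (fun r : {u : ℕ // s ≤ u ∧ u ≤ t} => P r.1) μ)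
    {Q : Matrix (Fin n) (Fin n) ℝ}
    (hQ : ∀ r, s ≤ r → r ≤ t → ∀ i j,
      Q i j = ∫ ω, (Matrix.of (P r ω) * Matrix.of (P r ω)) i j ∂μ)
    (hΦs : ∀ ω, Φ s ω = Matrix.of (P s ω))
    (hΦstep : ∀ r ω, s ≤ r → r < t → Φ (r + 1) ω = Matrix.of (P (r + 1) ω) * Φ r ω)
    {w : Fin n → ℝ} (hw : ∑ j, w j = 0) {r : ℕ} (hsr : s ≤ r) (hrt : r ≤ t) :
    ∫ ω, Φ r ω *ᵥ w ⬝ᵥ Φ r ω *ᵥ w ∂μ ≤ lambda2 Q ^ (r - s + 1) * (w ⬝ᵥ w) := by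
  induction r, hsr using Nat.le_induction with
  | base =>
    have h := integral_mulVec_dotProduct_mulVec_le (μ := μ) (A := fun ω => Matrix.of (P s ω))
      (u := fun _ => w) (fun ω => hsym s ω le_rfl hrt) (fun _ => hw) (hQ s le_rfl hrt)
      (fun _ _ => indepFun_const_right _ _)
      (integrable_mul_self_apply_of_doublyStochastic (hmeas s) fun ω => hds s ω le_rfl hrt)
      (fun _ _ => integrable_const _)
    simpa [hΦs] using h
  | succ r hsr ih =>
    have hrt' : r < t := by omega
    have hstep := integral_mulVec_dotProduct_mulVec_le (μ := μ)
      (A := fun ω => Matrix.of (P (r + 1) ω)) (u := fun ω => Φ r ω *ᵥ w)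
      (fun ω => hsym _ ω (by omega) hrt)
      (fun ω => (sum_mulVec_of_mem_doublyStochastic
        (randomProduct_mem_doublyStochastic hds hΦs hΦstep hsr hrt'.le ω)).trans hw)
      (hQ _ (by omega) hrt)
      (fun j k => (indepFun_randomProduct_mulVec hmeas hindep hΦs hΦstep hsr hrt' w).comp
        (measurable_of_mul_self_apply j k)
        ((measurable_pi_apply j).mul (measurable_pi_apply k)))
      (integrable_mul_self_apply_of_doublyStochastic (hmeas _) fun ω => hds _ ω (by omega) hrt)
      (integrable_randomProduct_mulVec_mul hmeas hds hΦs hΦstep hsr hrt'.le w)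
    simp only [hΦstep r _ hsr hrt', ← mulVec_mulVec]
    calc _ ≤ lambda2 Q * ∫ ω, Φ r ω *ᵥ w ⬝ᵥ Φ r ω *ᵥ w ∂μ := hstep
      _ ≤ lambda2 Q * (lambda2 Q ^ (r - s + 1) * (w ⬝ᵥ w)) :=
        mul_le_mul_of_nonneg_left (ih hrt'.le) (lambda2_nonneg Q)
      _ = lambda2 Q ^ (r + 1 - s + 1) * (w ⬝ᵥ w) := by
        rw [show r + 1 - s = r - s + 1 by omega]; ring

end RandomProduct

theorem random_product_mixing_tail_general
    {n : ℕ}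
    {Ω : Type*} [MeasurableSpace Ω] (μ : Measure Ω) [IsProbabilityMeasure μ]
    (s t : ℕ) (hst : s ≤ t)
    (P : ℕ → Ω → Fin n → Fin n → ℝ)
    (hmeas : ∀ r, Measurable (P r))
    (hds : ∀ r ω, s ≤ r → r ≤ t → DoublyStochastic (Matrix.of (P r ω)))
    (hsym : ∀ r ω, s ≤ r → r ≤ t → (Matrix.of (P r ω)).IsSymm)
    (hindep : iIndepFun
      (fun r : {u : ℕ // s ≤ u ∧ u ≤ t} => P r.1) μ)
    (Q : Matrix (Fin n) (Fin n) ℝ)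
    (hQ : ∀ r, s ≤ r → r ≤ t → ∀ i j,
      Q i j = ∫ ω, (Matrix.of (P r ω) * Matrix.of (P r ω)) i j ∂μ)
    (Φ : ℕ → Ω → Matrix (Fin n) (Fin n) ℝ)
    (hΦs : ∀ ω, Φ s ω = Matrix.of (P s ω))
    (hΦstep : ∀ r ω, s ≤ r → r < t → Φ (r + 1) ω = Matrix.of (P (r + 1) ω) * Φ r ω)
    (ε : ℝ) (hε : 0 < ε) (i : Fin n) :
    μ {ω | ε ≤ l2norm ((Φ t ω).mulVec (Pi.single i 1) -
        (n : ℝ)⁻¹ • (fun _ : Fin n => (1 : ℝ)))} ≤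
      ENNReal.ofReal (ε⁻¹ ^ 2 * lambda2 Q ^ (t - s + 1)) := by
  set w : Fin n → ℝ := Pi.single i 1 - (n : ℝ)⁻¹ • 1 with hw_def
  have hw : ∑ j, w j = 0 := by
    simp [w, sum_sub_distrib, (Nat.cast_pos.2 i.pos).ne']
  have hww : w ⬝ᵥ w ≤ 1 := by
    have hwi : w ⬝ᵥ w = w i := by
      nth_rewrite 2 [hw_def]
      rw [dotProduct_sub, dotProduct_smul, dotProduct_single, dotProduct_one, hw]
      simp
    rw [hwi]
    simp [w]
  have hΦt : ∀ ω, (Φ t ω).mulVec (Pi.single i 1) - (n : ℝ)⁻¹ • (fun _ : Fin n => (1 : ℝ))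
      = Φ t ω *ᵥ w := fun ω => by
    rw [mulVec_sub, mulVec_smul, mulVec_one_of_mem_doublyStochastic
      (randomProduct_mem_doublyStochastic hds hΦs hΦstep hst le_rfl ω)]
    rfl
  simp only [hΦt]
  refine (meas_l2norm_ge_le (integrable_finsetSum _ fun j _ =>
    integrable_randomProduct_mulVec_mul hmeas hds hΦs hΦstep hst le_rfl w j j) hε).trans
    (ENNReal.ofReal_le_ofReal ?_)
  have hcontr := integral_randomProduct_mulVec_le hmeas hds hsym hindep hQ hΦs hΦstep hw hst le_rfl
  gcongr
  exact hcontr.trans (mul_le_of_le_one_right (pow_nonneg (lambda2_nonneg Q) _) hww)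

/-- **Mixing tail bound for random doubly stochastic matrix products.**
With `Φ(t,s) = P(t) P(t−1) ⋯ P(s)` a product of independent random symmetric doubly
stochastic matrices whose squares share a common mean `Q` with second-largest eigenvalue
`λ`, one has `Pr(‖Φ(t,s) e_i − 𝟏/n‖₂ ≥ ε) ≤ ε⁻² λ^{t−s+1}`. -/
theorem random_product_mixing_tail
    {n : ℕ} (hn : 0 < n)
    {Ω : Type*} [MeasurableSpace Ω] (μ : Measure Ω) [IsProbabilityMeasure μ]
    (s t : ℕ) (hst : s ≤ t)
    (P : ℕ → Ω → Fin n → Fin n → ℝ)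
    (hmeas : ∀ r, Measurable (P r))
    (hds : ∀ r ω, s ≤ r → r ≤ t → DoublyStochastic (Matrix.of (P r ω)))
    (hsym : ∀ r ω, s ≤ r → r ≤ t → (Matrix.of (P r ω)).IsSymm)
    (hindep : iIndepFun
      (fun r : {u : ℕ // s ≤ u ∧ u ≤ t} => P r.1) μ)
    (Q : Matrix (Fin n) (Fin n) ℝ)
    (hQ : ∀ r, s ≤ r → r ≤ t → ∀ i j,
      Q i j = ∫ ω, (Matrix.of (P r ω) * Matrix.of (P r ω)) i j ∂μ)
    (Φ : ℕ → Ω → Matrix (Fin n) (Fin n) ℝ)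
    (hΦs : ∀ ω, Φ s ω = Matrix.of (P s ω))
    (hΦstep : ∀ r ω, s ≤ r → r < t → Φ (r + 1) ω = Matrix.of (P (r + 1) ω) * Φ r ω)
    (ε : ℝ) (hε : 0 < ε) (i : Fin n) :
    μ {ω | ε ≤ l2norm ((Φ t ω).mulVec (Pi.single i 1) -
        (n : ℝ)⁻¹ • (fun _ : Fin n => (1 : ℝ)))} ≤
      ENNReal.ofReal (ε⁻¹ ^ 2 * lambda2 Q ^ (t - s + 1)) :=
  random_product_mixing_tail_general μ s t hst P hmeas hds hsym hindep Q hQ Φ hΦs hΦstep ε hε i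
end
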